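/- Let X ∈ ℝ^{N×N} be symmetric positive semidefinite of rank r with eigenvalues λ₁ ≥ ⋯ ≥ λ_r > 0, let 1 ≤ k ≤ r, and assume λ_{k+1} ≤ λ_k/12. Suppose W_s ∈ ℝ^{N×k} has orthonormal columns that are eigenvectors of X with corresponding eigenvalues forming the diagonal of Λ_s = diag(λ_{s1},…,λ_{sk}), where λ_{s1} ≥ ⋯ ≥ λ_{sk} > 0 and λ_{sk} ≤ λ_{k+1}; suppose w* ∈ ℝ^N is a unit eigenvector of X with eigenvalue λ* ≥ λ_k satisfying w*ᵀW_s = 0; let Q ∈ O_k with last column q_k, and set U_s = W_s Λ_s^{1/2} Qᵀ and D = w* q_kᵀ. Then DᵀU_s = U_sᵀD = 0 (so D is horizontal at U_s), ‖D‖_F = 1, and (1/2)‖U_s Dᵀ + D U_sᵀ‖_F² + ⟨U_s U_sᵀ − X, DDᵀ⟩ ≤ −0.91 λ_k; consequently λ_min(hess g(U_s)) ≤ −0.91 λ_k. -/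

import Mathlib

open Matrix

/-- Frobenius norm of a real matrix. -/
noncomputable def frob {m n : Type*} [Fintype m] [Fintype n] (M : Matrix m n ℝ) : ℝ :=
  Real.sqrt (∑ i, ∑ j, (M i j) ^ 2)

/-- Trace (entrywise) inner product of two real matrices. -/
noncomputable def mip {m n : Type*} [Fintype m] [Fintype n] (A B : Matrix m n ℝ) : ℝ :=
  ∑ i, ∑ j, A i j * B i j

/-- The smallest eigenvalue of the Riemannian Hessian of the matrix-sensing population
risk at `U`, i.e. the infimum of the Hessian quadratic form over horizontal directions
of unit Frobenius norm. -/
noncomputable def hessMin {N k : ℕ} (X : Matrix (Fin N) (Fin N) ℝ)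
    (U : Matrix (Fin N) (Fin k) ℝ) : ℝ :=
  sInf {t : ℝ | ∃ D : Matrix (Fin N) (Fin k) ℝ, Dᵀ * U = Uᵀ * D ∧ frob D = 1 ∧
    t = (1 / 2) * frob (U * Dᵀ + D * Uᵀ) ^ 2 + mip (U * Uᵀ - X) (D * Dᵀ)}

/-! Because `w*` is orthogonal to the columns of `W_s`, the rank-one direction `D = w* q_kᵀ` is
horizontal, and `U_s q_k = √λ_{sk} · W_s e_k` is `√λ_{sk}` times a unit vector orthogonal to `w*`.
Hence `½‖U_s Dᵀ + D U_sᵀ‖² = λ_{sk}` and `⟨U_s U_sᵀ − X, D Dᵀ⟩ = −λ*`, so the Hessian form equals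
`λ_{sk} − λ* ≤ λ_k / 12 − λ_k < −0.91 λ_k`. -/

section Frobenius

variable {m n : Type*} [Fintype m] [Fintype n]

lemma frob_sq (M : Matrix m n ℝ) : frob M ^ 2 = ∑ i, ∑ j, M i j ^ 2 :=
  Real.sq_sqrt (by positivity)

attribute [local instance] Matrix.frobeniusNormedAddCommGroup in
lemma frob_eq_norm (M : Matrix m n ℝ) : frob M = ‖M‖ := by
  rw [frobenius_norm_def, frob, Real.sqrt_eq_rpow]
  simp only [Real.norm_eq_abs, Real.rpow_two, sq_abs]

attribute [local instance] Matrix.frobeniusNormedAddCommGroup in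
lemma frob_mul_le {l : Type*} [Fintype l] (A : Matrix l m ℝ) (B : Matrix m n ℝ) :
    frob (A * B) ≤ frob A * frob B := by
  simpa only [frob_eq_norm] using frobenius_norm_mul A B

attribute [local instance] Matrix.frobeniusNormedAddCommGroup in
lemma frob_transpose (M : Matrix m n ℝ) : frob Mᵀ = frob M := by
  simpa only [frob_eq_norm] using frobenius_norm_transpose M

lemma neg_frob_mul_frob_le_mip (A B : Matrix m n ℝ) : -(frob A * frob B) ≤ mip A B := by
  have h := Real.sum_mul_le_sqrt_mul_sqrt Finset.univ
    (fun p : m × n => -A p.1 p.2) (fun p : m × n => B p.1 p.2)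
  simp only [Fintype.sum_prod_type, neg_mul, Finset.sum_neg_distrib, neg_sq] at h
  rw [frob, frob]
  unfold mip
  linarith

lemma frob_vecMulVec_sq (w : m → ℝ) (v : n → ℝ) :
    frob (vecMulVec w v) ^ 2 = (w ⬝ᵥ w) * (v ⬝ᵥ v) := by
  rw [frob_sq]
  simp only [dotProduct, Finset.sum_mul_sum, vecMulVec_apply]
  exact Finset.sum_congr rfl fun i _ => Finset.sum_congr rfl fun j _ => by ring

lemma frob_vecMulVec_add_vecMulVec_sq (a w : m → ℝ) :
    frob (vecMulVec a w + vecMulVec w a) ^ 2 =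
      2 * ((a ⬝ᵥ a) * (w ⬝ᵥ w)) + 2 * (a ⬝ᵥ w) ^ 2 := by
  rw [frob_sq, sq (a ⬝ᵥ w)]
  simp only [Matrix.add_apply, vecMulVec_apply, add_sq, Finset.sum_add_distrib]
  rw [Finset.sum_comm (f := fun i l => (w i * a l) ^ 2)]
  simp only [dotProduct, Finset.sum_mul_sum]
  simp only [Finset.mul_sum, ← Finset.sum_add_distrib]
  exact Finset.sum_congr rfl fun i _ => Finset.sum_congr rfl fun l _ => by ring

lemma mip_vecMulVec_self (A : Matrix m m ℝ) (w : m → ℝ) :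
    mip A (vecMulVec w w) = w ⬝ᵥ (A *ᵥ w) := by
  simp only [mip, vecMulVec_apply, dotProduct, mulVec, Finset.mul_sum]
  exact Finset.sum_congr rfl fun i _ => Finset.sum_congr rfl fun j _ => by ring

end Frobenius

section Hessian

variable {n k : Type*} [Fintype n]

lemma transpose_vecMulVec_mul_eq_zero {U : Matrix n k ℝ} {w : n → ℝ} (hwU : w ᵥ* U = 0)
    (q : k → ℝ) : (vecMulVec w q)ᵀ * U = 0 := by
  rw [transpose_vecMulVec, vecMulVec_mul, hwU, vecMulVec_zero]

lemma transpose_mul_vecMulVec_eq_zero {U : Matrix n k ℝ} {w : n → ℝ} (hwU : w ᵥ* U = 0)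
    (q : k → ℝ) : Uᵀ * vecMulVec w q = 0 := by
  rw [mul_vecMulVec, mulVec_transpose, hwU, zero_vecMulVec]

variable [Fintype k]

noncomputable def hessForm (X : Matrix n n ℝ) (U D : Matrix n k ℝ) : ℝ :=
  (1 / 2) * frob (U * Dᵀ + D * Uᵀ) ^ 2 + mip (U * Uᵀ - X) (D * Dᵀ)

lemma neg_frob_le_hessForm (X : Matrix n n ℝ) (U : Matrix n k ℝ) {D : Matrix n k ℝ}
    (hD : frob D = 1) : -frob (U * Uᵀ - X) ≤ hessForm X U D := by
  have hDD : frob (D * Dᵀ) ≤ 1 := by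
    simpa only [frob_transpose, hD, mul_one] using frob_mul_le D Dᵀ
  have hmip := neg_frob_mul_frob_le_mip (U * Uᵀ - X) (D * Dᵀ)
  have hprod : frob (U * Uᵀ - X) * frob (D * Dᵀ) ≤ frob (U * Uᵀ - X) :=
    mul_le_of_le_one_right (Real.sqrt_nonneg _) hDD
  unfold hessForm
  nlinarith [sq_nonneg (frob (U * Dᵀ + D * Uᵀ))]

lemma hessForm_vecMulVec {X : Matrix n n ℝ} {U : Matrix n k ℝ} {w : n → ℝ} {q : k → ℝ} {μ : ℝ}
    (hwU : w ᵥ* U = 0) (hw : w ⬝ᵥ w = 1) (hq : q ⬝ᵥ q = 1) (hXw : X *ᵥ w = μ • w) :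
    hessForm X U (vecMulVec w q) = (U *ᵥ q) ⬝ᵥ (U *ᵥ q) - μ := by
  have hsym : U * (vecMulVec w q)ᵀ + vecMulVec w q * Uᵀ =
      vecMulVec (U *ᵥ q) w + vecMulVec w (U *ᵥ q) := by
    rw [transpose_vecMulVec, mul_vecMulVec, vecMulVec_mul, vecMul_transpose]
  have horth : (U *ᵥ q) ⬝ᵥ w = 0 := by
    rw [dotProduct_comm, dotProduct_mulVec, hwU, zero_dotProduct]
  have hDD : vecMulVec w q * (vecMulVec w q)ᵀ = vecMulVec w w := by
    rw [transpose_vecMulVec, vecMulVec_mul_vecMulVec, hq, one_smul]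
  have hUU : w ⬝ᵥ ((U * Uᵀ) *ᵥ w) = 0 := by
    rw [← mulVec_mulVec, mulVec_transpose, hwU, mulVec_zero, dotProduct_zero]
  rw [hessForm, hsym, frob_vecMulVec_add_vecMulVec_sq, horth, hDD, mip_vecMulVec_self,
    sub_mulVec, dotProduct_sub, hUU, hXw, dotProduct_smul, hw]
  simp only [smul_eq_mul]
  ring

lemma hessMin_le_hessForm {N K : ℕ} (X : Matrix (Fin N) (Fin N) ℝ)
    {U D : Matrix (Fin N) (Fin K) ℝ} (hDU : Dᵀ * U = Uᵀ * D) (hD : frob D = 1) :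
    hessMin X U ≤ hessForm X U D :=
  csInf_le ⟨-frob (U * Uᵀ - X), by rintro _ ⟨E, -, hE, rfl⟩; exact neg_frob_le_hessForm X U hE⟩
    ⟨D, hDU, hD, rfl⟩

end Hessian

lemma col_dotProduct_col_of_transpose_mul_self_eq_one {n k : Type*} [Fintype n] [DecidableEq k]
    {M : Matrix n k ℝ} (hM : Mᵀ * M = 1) (j : k) : M.col j ⬝ᵥ M.col j = 1 := by
  have h := congrFun₂ hM j j
  rw [mul_apply', one_apply_eq] at h
  exact h

lemma mul_diagonal_mul_transpose_mulVec_col {n k : Type*} [Fintype k] [DecidableEq k]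
    (W : Matrix n k ℝ) (s : k → ℝ) {Q : Matrix k k ℝ} (hQ : Qᵀ * Q = 1) (j : k) :
    (W * diagonal s * Qᵀ) *ᵥ Q.col j = s j • W.col j := by
  rw [← mulVec_single_one Q, mulVec_mulVec, Matrix.mul_assoc, hQ, Matrix.mul_one,
    ← mulVec_mulVec, diagonal_mulVec_single, ← smul_eq_mul, Pi.single_smul', mulVec_smul,
    mulVec_single_one]

theorem stmt_9 {N r k : ℕ} (hk1 : 1 ≤ k) (hkr : k ≤ r)
    (lam : Fin r → ℝ)
    (X : Matrix (Fin N) (Fin N) ℝ)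
    (hgap : (if h : k < r then lam ⟨k, h⟩ else 0) ≤ lam ⟨k - 1, by omega⟩ / 12)
    (Ws : Matrix (Fin N) (Fin k) ℝ) (lams : Fin k → ℝ)
    (hWs : Wsᵀ * Ws = 1) (hlamspos : ∀ i, 0 < lams i)
    (hlamsk : lams ⟨k - 1, by omega⟩ ≤ (if h : k < r then lam ⟨k, h⟩ else 0))
    (wstar : Fin N → ℝ) (lamstar : ℝ)
    (hwunit : ∑ i, wstar i ^ 2 = 1)
    (hweig : X.mulVec wstar = lamstar • wstar)
    (hlamstar : lam ⟨k - 1, by omega⟩ ≤ lamstar)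
    (hworth : ∀ j, ∑ i, wstar i * Ws i j = 0)
    (Q : Matrix (Fin k) (Fin k) ℝ) (hQ : Qᵀ * Q = 1)
    (Us : Matrix (Fin N) (Fin k) ℝ)
    (hUs : Us = Ws * diagonal (fun i => Real.sqrt (lams i)) * Qᵀ)
    (D : Matrix (Fin N) (Fin k) ℝ)
    (hDdef : D = Matrix.of fun i j => wstar i * Q j ⟨k - 1, by omega⟩) :
    Dᵀ * Us = 0 ∧ Usᵀ * D = 0 ∧ frob D = 1 ∧
    (1 / 2) * frob (Us * Dᵀ + D * Usᵀ) ^ 2 + mip (Us * Usᵀ - X) (D * Dᵀ) ≤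
      -0.91 * lam ⟨k - 1, by omega⟩ ∧
    hessMin X Us ≤ -0.91 * lam ⟨k - 1, by omega⟩ := by
  set j : Fin k := ⟨k - 1, by omega⟩
  have hD : D = vecMulVec wstar (Q.col j) := hDdef
  have hw : wstar ⬝ᵥ wstar = 1 := by simpa only [dotProduct, ← sq] using hwunit
  have hwUs : wstar ᵥ* Us = 0 := by
    have hwWs : wstar ᵥ* Ws = 0 := funext hworth
    rw [hUs, ← vecMul_vecMul, ← vecMul_vecMul, hwWs, zero_vecMul, zero_vecMul]
  have hDU : Dᵀ * Us = 0 := hD ▸ transpose_vecMulVec_mul_eq_zero hwUs _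
  have hUD : Usᵀ * D = 0 := hD ▸ transpose_mul_vecMulVec_eq_zero hwUs _
  have hDunit : frob D = 1 := by
    have h := frob_vecMulVec_sq wstar (Q.col j)
    rw [hw, col_dotProduct_col_of_transpose_mul_self_eq_one hQ, one_mul, ← hD] at h
    exact (pow_eq_one_iff_of_nonneg (Real.sqrt_nonneg _) two_ne_zero).1 h
  have hvalue : hessForm X Us D = lams j - lamstar := by
    rw [hD, hessForm_vecMulVec hwUs hw (col_dotProduct_col_of_transpose_mul_self_eq_one hQ j)
      hweig, hUs, mul_diagonal_mul_transpose_mulVec_col _ _ hQ, smul_dotProduct, dotProduct_smul,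
      col_dotProduct_col_of_transpose_mul_self_eq_one hWs, smul_eq_mul, smul_eq_mul, mul_one,
      Real.mul_self_sqrt (hlamspos j).le]
  have hform : hessForm X Us D ≤ -0.91 * lam ⟨k - 1, by omega⟩ := by
    rw [hvalue]
    linarith [hlamspos j]
  exact ⟨hDU, hUD, hDunit, hform, (hessMin_le_hessForm X (by rw [hDU, hUD]) hDunit).trans hform⟩
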